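/- Let B, C > 0, let q be a probability density on ℝ supported in [−B,B], and let p_T be a probability density on ℝ supported in [−C,C]. Then, as α → 1 from the left, F(α) = (α − 1) · (∫_ℝ ν q(ν) dν) · (∫_ℝ x p_T(x) dx) + o(α − 1); that is, (F(α) − (α−1)·(∫ ν q dν)(∫ x p_T dx))/(α−1) → 0 as α → 1⁻. -/

import Mathlib

/-!
Write `t = 1 - α` and let `μ` be the law of density `q`. For `|x| ≤ C` and `|ν| ≤ B` the exponent
in `H(α,x)` is `t x ν + O(t²)`, in particular `O(t)`. Jensen's inequality gives
`∫ g dμ ≤ log ∫ exp g dμ`, while `exp y ≤ 1 + y + y²` and `log z ≤ z - 1` give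
`log ∫ exp g dμ ≤ ∫ g dμ + sup g²`; hence `log H(α,x) = t x ∫ ν q(ν) dν + O(t²)` uniformly in
`|x| ≤ C`, and integrating against `p_T` yields `F(α) = (α - 1) (∫ ν q) (∫ x p_T) + O(t²)`.
-/

open MeasureTheory Real Filter
open scoped ENNReal Topology

/-- The correction factor `H(α,x) = ∫ ν, exp(-(1/(2α²))((1-α)² ν² - 2(1-α) x ν)) q(ν) dν`. -/
noncomputable def Hfun (q : ℝ → ℝ) (α x : ℝ) : ℝ :=
  ∫ ν : ℝ, Real.exp (-(1 / (2 * α ^ 2)) * ((1 - α) ^ 2 * ν ^ 2 - 2 * (1 - α) * x * ν)) * q ν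

/-- `F(α) = -∫ p_T(x) log H(α,x) dx`. -/
noncomputable def Ffun (q pT : ℝ → ℝ) (α : ℝ) : ℝ :=
  -∫ x : ℝ, pT x * Real.log (Hfun q α x)

section Density

variable {X : Type*} [MeasurableSpace X] {μ : Measure X} {f : X → ℝ}

lemma integral_withDensity_ofReal (hf : Measurable f) (hf0 : ∀ x, 0 ≤ f x) (g : X → ℝ) :
    ∫ x, g x ∂μ.withDensity (fun x => ENNReal.ofReal (f x)) = ∫ x, f x * g x ∂μ := by
  rw [integral_withDensity_eq_integral_toReal_smul hf.ennreal_ofReal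
    (ae_of_all _ fun _ => ENNReal.ofReal_lt_top)]
  simp only [ENNReal.toReal_ofReal (hf0 _), smul_eq_mul]

lemma isProbabilityMeasure_withDensity_ofReal (hf0 : ∀ x, 0 ≤ f x)
    (hf1 : ∫ x, f x ∂μ = 1) :
    IsProbabilityMeasure (μ.withDensity fun x => ENNReal.ofReal (f x)) := by
  have hint : Integrable f μ := .of_integral_ne_zero (by rw [hf1]; exact one_ne_zero)
  constructor
  rw [withDensity_apply _ MeasurableSet.univ, Measure.restrict_univ,
    ← ofReal_integral_eq_lintegral_ofReal hint (ae_of_all _ hf0), hf1, ENNReal.ofReal_one]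

lemma ae_withDensity_ofReal_mem (hf : Measurable f) {s : Set X}
    (hs : Function.support f ⊆ s) :
    ∀ᵐ x ∂μ.withDensity (fun x => ENNReal.ofReal (f x)), x ∈ s := by
  rw [ae_withDensity_iff hf.ennreal_ofReal]
  exact ae_of_all _ fun x hx => hs fun h => hx (by simp [h])

end Density

section ProbabilityMeasure

variable {X : Type*} [MeasurableSpace X] {μ : Measure X} [IsProbabilityMeasure μ]

lemma abs_integral_sub_integral_le {f g : X → ℝ} {ε : ℝ} (hf : AEStronglyMeasurable f μ)
    (hg : Integrable g μ) (h : ∀ᵐ x ∂μ, |f x - g x| ≤ ε) :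
    |∫ x, f x ∂μ - ∫ x, g x ∂μ| ≤ ε := by
  have hfg : Integrable (fun x => f x - g x) μ := .of_bound (hf.sub hg.1) ε h
  have hfi : Integrable f μ := (hfg.add hg).congr (ae_of_all _ fun x => by simp)
  rw [← integral_sub hfi hg]
  simpa using norm_integral_le_of_norm_le_const (h.mono fun x hx => (norm_eq_abs _).trans_le hx)

lemma abs_log_integral_exp_sub_integral_le {g : X → ℝ} {r : ℝ} (hg : AEStronglyMeasurable g μ)
    (hr : r ≤ 1) (hgr : ∀ᵐ x ∂μ, |g x| ≤ r) :
    |log (∫ x, exp (g x) ∂μ) - ∫ x, g x ∂μ| ≤ r ^ 2 := by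
  have hgi : Integrable g μ := .of_bound hg r hgr
  have hexpi : Integrable (fun x => exp (g x)) μ :=
    .of_bound (continuous_exp.comp_aestronglyMeasurable hg) (exp 1) (hgr.mono fun x hx => by
      rw [norm_of_nonneg (exp_pos _).le]
      exact exp_le_exp.2 ((le_abs_self _).trans (hx.trans hr)))
  have jensen : exp (∫ x, g x ∂μ) ≤ ∫ x, exp (g x) ∂μ :=
    convexOn_exp.map_integral_le continuous_exp.continuousOn isClosed_univ
      (ae_of_all _ fun _ => Set.mem_univ _) hgi hexpi
  have hpos : 0 < ∫ x, exp (g x) ∂μ := (exp_pos _).trans_le jensen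
  have taylor : ∫ x, exp (g x) ∂μ ≤ 1 + ∫ x, g x ∂μ + r ^ 2 := by
    have hle : ∀ᵐ x ∂μ, exp (g x) ≤ 1 + g x + r ^ 2 := hgr.mono fun x hx => by
      have hexp := abs_exp_sub_one_sub_id_le (hx.trans hr)
      nlinarith [(abs_le.1 hexp).2, abs_nonneg (g x), sq_abs (g x)]
    have h1g : Integrable (fun x => 1 + g x) μ := (integrable_const 1).add hgi
    calc ∫ x, exp (g x) ∂μ ≤ ∫ x, (1 + g x + r ^ 2) ∂μ :=
          integral_mono_ae hexpi (h1g.add (integrable_const _)) hle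
      _ = 1 + ∫ x, g x ∂μ + r ^ 2 := by
          rw [integral_add h1g (integrable_const _),
            integral_add (integrable_const 1) hgi]
          simp
  rw [abs_sub_le_iff]
  constructor
  · linarith [log_le_sub_one_of_pos hpos]
  · linarith [(le_log_iff_exp_le hpos).2 jensen, sq_nonneg r]

end ProbabilityMeasure

noncomputable def correctionExponent (α x ν : ℝ) : ℝ :=
  -(1 / (2 * α ^ 2)) * ((1 - α) ^ 2 * ν ^ 2 - 2 * (1 - α) * x * ν)

lemma measurable_correctionExponent (α : ℝ) :
    Measurable fun p : ℝ × ℝ => correctionExponent α p.1 p.2 := by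
  unfold correctionExponent
  fun_prop

section Exponent

variable {α x ν B C : ℝ}

lemma abs_correctionExponent_sub_le (hα : 1 / 2 ≤ α) (hα1 : α ≤ 1) (hx : |x| ≤ C)
    (hν : |ν| ≤ B) :
    |correctionExponent α x ν - (1 - α) * x * ν| ≤ 2 * B * (B + 4 * C) * (1 - α) ^ 2 := by
  have hα0 : 0 < α := by linarith
  have hxν : |x * ν| ≤ C * B := by
    rw [abs_mul]; exact mul_le_mul hx hν (abs_nonneg _) ((abs_nonneg _).trans hx)
  have hquad : |2 * (1 + α) * x * ν - ν ^ 2| ≤ B * (B + 4 * C) := by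
    have h1 : |2 * (1 + α) * (x * ν)| ≤ 4 * (C * B) := by
      rw [abs_mul, abs_of_pos (by positivity : (0 : ℝ) < 2 * (1 + α))]
      nlinarith [abs_nonneg (x * ν)]
    have h2 : |ν ^ 2| ≤ B ^ 2 := by
      rw [abs_pow]; exact pow_le_pow_left₀ (abs_nonneg _) hν 2
    calc |2 * (1 + α) * x * ν - ν ^ 2| ≤ |2 * (1 + α) * (x * ν)| + |ν ^ 2| := by
          rw [← mul_assoc]; exact abs_sub _ _
      _ ≤ B * (B + 4 * C) := by linarith
  have hexpand : correctionExponent α x ν - (1 - α) * x * ν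
      = (1 - α) ^ 2 * (2 * (1 + α) * x * ν - ν ^ 2) / (2 * α ^ 2) := by
    unfold correctionExponent
    field_simp
    ring
  rw [hexpand, abs_div, abs_mul, abs_of_pos (by positivity : (0 : ℝ) < 2 * α ^ 2),
    abs_of_nonneg (sq_nonneg _), div_le_iff₀ (by positivity)]
  have hK : 0 ≤ B * (B + 4 * C) := (abs_nonneg _).trans hquad
  nlinarith [mul_le_mul_of_nonneg_left hquad (sq_nonneg (1 - α)),
    mul_nonneg (mul_nonneg hK (sq_nonneg (1 - α))) (by nlinarith : (0 : ℝ) ≤ 4 * α ^ 2 - 1)]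

lemma abs_correctionExponent_le (hα : 1 / 2 ≤ α) (hα1 : α ≤ 1) (hx : |x| ≤ C) (hν : |ν| ≤ B) :
    |correctionExponent α x ν| ≤ (B * C + 2 * B * (B + 4 * C)) * (1 - α) := by
  have hB : 0 ≤ B := (abs_nonneg _).trans hν
  have hC : 0 ≤ C := (abs_nonneg _).trans hx
  have hlin : |(1 - α) * x * ν| ≤ (1 - α) * (B * C) := by
    rw [mul_assoc, abs_mul, abs_of_nonneg (by linarith), abs_mul]
    exact mul_le_mul_of_nonneg_left (by nlinarith [abs_nonneg x, abs_nonneg ν]) (by linarith)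
  have hsq : (1 - α) ^ 2 ≤ 1 - α := by nlinarith
  have hK : 0 ≤ 2 * B * (B + 4 * C) := by positivity
  calc |correctionExponent α x ν|
      ≤ |correctionExponent α x ν - (1 - α) * x * ν| + |(1 - α) * x * ν| := by
        linarith [abs_sub_abs_le_abs_sub (correctionExponent α x ν) ((1 - α) * x * ν)]
    _ ≤ 2 * B * (B + 4 * C) * (1 - α) ^ 2 + (1 - α) * (B * C) :=
        add_le_add (abs_correctionExponent_sub_le hα hα1 hx hν) hlin
    _ ≤ (B * C + 2 * B * (B + 4 * C)) * (1 - α) := by nlinarith [mul_le_mul_of_nonneg_left hsq hK]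

end Exponent

section Expansion

variable {μ ρ : Measure ℝ} [IsProbabilityMeasure μ] [IsProbabilityMeasure ρ] {α B C : ℝ}

lemma abs_log_integral_exp_correctionExponent_sub_le {x : ℝ} (hμ : ∀ᵐ ν ∂μ, |ν| ≤ B)
    (hα : 1 / 2 ≤ α) (hα1 : α ≤ 1) (hαr : (B * C + 2 * B * (B + 4 * C)) * (1 - α) ≤ 1)
    (hx : |x| ≤ C) :
    |log (∫ ν, exp (correctionExponent α x ν) ∂μ) - (1 - α) * (∫ ν, ν ∂μ) * x|
      ≤ ((B * C + 2 * B * (B + 4 * C)) ^ 2 + 2 * B * (B + 4 * C)) * (1 - α) ^ 2 := by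
  have he : AEStronglyMeasurable (correctionExponent α x) μ :=
    ((measurable_correctionExponent α).comp measurable_prodMk_left).aestronglyMeasurable
  have hlin : Integrable (fun ν => (1 - α) * x * ν) μ :=
    (Integrable.of_bound measurable_id.aestronglyMeasurable B hμ).const_mul _
  have hjensen := abs_log_integral_exp_sub_integral_le he hαr
    (hμ.mono fun ν hν => abs_correctionExponent_le hα hα1 hx hν)
  have hmean := abs_integral_sub_integral_le he hlin
    (hμ.mono fun ν hν => abs_correctionExponent_sub_le hα hα1 hx hν)
  rw [integral_const_mul] at hmean
  calc _ ≤ |log (∫ ν, exp (correctionExponent α x ν) ∂μ) - ∫ ν, correctionExponent α x ν ∂μ|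
        + |∫ ν, correctionExponent α x ν ∂μ - (1 - α) * x * ∫ ν, ν ∂μ| := by
          rw [mul_right_comm]; exact abs_sub_le _ _ _
    _ ≤ _ := by linarith

lemma abs_neg_integral_log_integral_exp_correctionExponent_sub_le (hμ : ∀ᵐ ν ∂μ, |ν| ≤ B)
    (hρ : ∀ᵐ x ∂ρ, |x| ≤ C) (hα : 1 / 2 ≤ α) (hα1 : α ≤ 1)
    (hαr : (B * C + 2 * B * (B + 4 * C)) * (1 - α) ≤ 1) :
    |-(∫ x, log (∫ ν, exp (correctionExponent α x ν) ∂μ) ∂ρ)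
        - (α - 1) * ((∫ ν, ν ∂μ) * ∫ x, x ∂ρ)|
      ≤ ((B * C + 2 * B * (B + 4 * C)) ^ 2 + 2 * B * (B + 4 * C)) * (1 - α) ^ 2 := by
  have hlogH : AEStronglyMeasurable (fun x => log (∫ ν, exp (correctionExponent α x ν) ∂μ)) ρ :=
    ((measurable_correctionExponent α).exp.stronglyMeasurable.integral_prod_right'
      (ν := μ)).measurable.log.aestronglyMeasurable
  have hlin : Integrable (fun x => (1 - α) * (∫ ν, ν ∂μ) * x) ρ :=
    (Integrable.of_bound measurable_id.aestronglyMeasurable C hρ).const_mul _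
  have h := abs_integral_sub_integral_le hlogH hlin
    (hρ.mono fun x hx => abs_log_integral_exp_correctionExponent_sub_le hμ hα hα1 hαr hx)
  rw [integral_const_mul] at h
  rw [← abs_neg]
  convert h using 2
  ring

lemma tendsto_mul_one_sub (c : ℝ) : Tendsto (fun α : ℝ => c * (1 - α)) (𝓝 1) (𝓝 0) := by
  simpa using (continuous_const.mul (continuous_const.sub continuous_id)).tendsto (1 : ℝ)
    (f := fun α : ℝ => c * (1 - α))

theorem tendsto_neg_integral_log_integral_exp_correctionExponent_sub_div
    (hμ : ∀ᵐ ν ∂μ, |ν| ≤ B) (hρ : ∀ᵐ x ∂ρ, |x| ≤ C) :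
    Tendsto (fun α => (-(∫ x, log (∫ ν, exp (correctionExponent α x ν) ∂μ) ∂ρ)
        - (α - 1) * ((∫ ν, ν ∂μ) * ∫ x, x ∂ρ)) / (α - 1)) (𝓝[<] 1) (𝓝 0) := by
  set K := B * C + 2 * B * (B + 4 * C)
  set L := K ^ 2 + 2 * B * (B + 4 * C)
  have hnear : ∀ᶠ α in 𝓝[<] (1 : ℝ), (1 / 2 < α ∧ K * (1 - α) < 1) ∧ α < 1 :=
    (((eventually_gt_nhds (by norm_num)).and
      ((tendsto_mul_one_sub K).eventually_lt_const zero_lt_one)).filter_mono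
        nhdsWithin_le_nhds).and self_mem_nhdsWithin
  refine squeeze_zero_norm' (hnear.mono fun α ⟨⟨hα, hαr⟩, hα1⟩ => ?_)
    ((tendsto_mul_one_sub L).mono_left nhdsWithin_le_nhds)
  rw [norm_div, norm_eq_abs, norm_eq_abs, abs_of_neg (sub_neg.2 hα1),
    div_le_iff₀ (by linarith)]
  calc _ ≤ L * (1 - α) ^ 2 :=
        abs_neg_integral_log_integral_exp_correctionExponent_sub_le hμ hρ hα.le hα1.le hαr.le
    _ = L * (1 - α) * -(α - 1) := by ring

end Expansion

theorem statement12_general (B C : ℝ)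
    (q : ℝ → ℝ) (hq_meas : Measurable q) (hq_nonneg : ∀ x, 0 ≤ q x)
    (hq_one : ∫ x, q x = 1) (hq_supp : Function.support q ⊆ Set.Icc (-B) B)
    (pT : ℝ → ℝ) (hpT_meas : Measurable pT) (hpT_nonneg : ∀ x, 0 ≤ pT x)
    (hpT_one : ∫ x, pT x = 1) (hpT_supp : Function.support pT ⊆ Set.Icc (-C) C) :
    Tendsto
      (fun α : ℝ =>
        (Ffun q pT α - (α - 1) * ((∫ ν : ℝ, ν * q ν) * (∫ x : ℝ, x * pT x))) / (α - 1))
      (nhdsWithin 1 (Set.Iio 1)) (nhds 0) := by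
  have := isProbabilityMeasure_withDensity_ofReal (μ := volume) hq_nonneg hq_one
  have := isProbabilityMeasure_withDensity_ofReal (μ := volume) hpT_nonneg hpT_one
  have hμ := (ae_withDensity_ofReal_mem (μ := volume) hq_meas hq_supp).mono fun _ => abs_le.2
  have hρ := (ae_withDensity_ofReal_mem (μ := volume) hpT_meas hpT_supp).mono fun _ => abs_le.2
  simpa only [Ffun, Hfun, correctionExponent, integral_withDensity_ofReal hq_meas hq_nonneg,
    integral_withDensity_ofReal hpT_meas hpT_nonneg, mul_comm (q _), mul_comm (pT _)]
    using tendsto_neg_integral_log_integral_exp_correctionExponent_sub_div hμ hρ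

/-- If `q` is a probability density supported in `[-B,B]` and `p_T` a probability density
supported in `[-C,C]`, then, as `α → 1⁻`,
`F(α) = (α-1)·(∫ ν q(ν) dν)·(∫ x p_T(x) dx) + o(α-1)`; i.e. the quotient
`(F(α) - (α-1)·(∫ ν q)(∫ x p_T))/(α-1)` tends to `0`. -/
theorem statement12 (B C : ℝ) (hB : 0 < B) (hC : 0 < C)
    (q : ℝ → ℝ) (hq_meas : Measurable q) (hq_nonneg : ∀ x, 0 ≤ q x)
    (hq_one : ∫ x, q x = 1) (hq_supp : Function.support q ⊆ Set.Icc (-B) B)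
    (pT : ℝ → ℝ) (hpT_meas : Measurable pT) (hpT_nonneg : ∀ x, 0 ≤ pT x)
    (hpT_one : ∫ x, pT x = 1) (hpT_supp : Function.support pT ⊆ Set.Icc (-C) C) :
    Tendsto
      (fun α : ℝ =>
        (Ffun q pT α - (α - 1) * ((∫ ν : ℝ, ν * q ν) * (∫ x : ℝ, x * pT x))) / (α - 1))
      (nhdsWithin 1 (Set.Iio 1)) (nhds 0) :=
  statement12_general B C q hq_meas hq_nonneg hq_one hq_supp pT hpT_meas hpT_nonneg hpT_one hpT_supp
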